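/- Let V₀, V₁, V₂, V₃, C₁, C be positive reals with V₀ − V₁ − V₃ > 0, V₀ − V₁ > 0, V₁ − V₂ > 0, V₁ − V₂ + V₃ > 0. If C/C₁ < ((√(V₀−V₁) − √(V₀−V₁−V₃))/(√(V₁−V₂+V₃) − √(V₁−V₂)))², and √(V₁−V₂+V₃) > √(V₁−V₂), then (√((V₀−V₁−V₃)C₁) + √((V₁−V₂+V₃)C))² < (√((V₀−V₁)C₁) + √((V₁−V₂)C))². -/
import Mathlib


/-- Condition (6.16): the generalized class beats the two-auxiliary class
under the stated cost-ratio condition. -/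
theorem generalized_beats_two_aux (V₀ V₁ V₂ V₃ C₁ C : ℝ)
    (hV₀ : 0 < V₀) (hV₁ : 0 < V₁) (hV₂ : 0 < V₂) (hV₃ : 0 < V₃)
    (hC₁ : 0 < C₁) (hC : 0 < C)
    (h013 : V₀ - V₁ - V₃ > 0) (h01 : V₀ - V₁ > 0) (h12 : V₁ - V₂ > 0)
    (h123 : V₁ - V₂ + V₃ > 0)
    (hcond : C / C₁ <
      ((Real.sqrt (V₀ - V₁) - Real.sqrt (V₀ - V₁ - V₃)) /
        (Real.sqrt (V₁ - V₂ + V₃) - Real.sqrt (V₁ - V₂))) ^ 2)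
    (hsq : Real.sqrt (V₁ - V₂ + V₃) > Real.sqrt (V₁ - V₂)) :
    (Real.sqrt ((V₀ - V₁ - V₃) * C₁) + Real.sqrt ((V₁ - V₂ + V₃) * C)) ^ 2
      < (Real.sqrt ((V₀ - V₁) * C₁) + Real.sqrt ((V₁ - V₂) * C)) ^ 2 := by
  set a := Real.sqrt (V₀ - V₁) with ha
  set b := Real.sqrt (V₀ - V₁ - V₃) with hb
  set c := Real.sqrt (V₁ - V₂ + V₃) with hc
  set d := Real.sqrt (V₁ - V₂) with hd
  have hab : b < a := Real.sqrt_lt_sqrt h013.le (by linarith)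
  have hb0 : 0 ≤ b := Real.sqrt_nonneg _
  have hd0 : 0 ≤ d := Real.sqrt_nonneg _
  have hcd : 0 < c - d := by linarith
  have hsC₁ : 0 < Real.sqrt C₁ := Real.sqrt_pos.mpr hC₁
  have hsC : 0 ≤ Real.sqrt C := Real.sqrt_nonneg _
  have hq : Real.sqrt (C / C₁) < (a - b) / (c - d) := by
    have := Real.sqrt_lt_sqrt (by positivity) hcond
    rwa [Real.sqrt_sq (div_nonneg (by linarith) hcd.le)] at this
  rw [Real.sqrt_div hC.le] at hq
  have key : Real.sqrt C * (c - d) < (a - b) * Real.sqrt C₁ :=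
    (div_lt_div_iff₀ hsC₁ hcd).mp hq
  have h1 : b * Real.sqrt C₁ + c * Real.sqrt C < a * Real.sqrt C₁ + d * Real.sqrt C := by
    nlinarith
  rw [Real.sqrt_mul h013.le, Real.sqrt_mul h123.le, Real.sqrt_mul h01.le,
    Real.sqrt_mul h12.le]
  apply pow_lt_pow_left₀ h1 (by positivity) (by norm_num)
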